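/- arXiv:1708.03222 — 10 statements merged into one kernel-verified Lean document; each statement's English description precedes it below -/
import Mathlib

section
/- For all real numbers k₁, k₂, let c = (cos k₁ + cos k₂ + cos(k₁+k₂))/3 and suppose c² ≠ 1. Set s = √(1 − c²), x = (sin k₁ + sin(k₁+k₂))/(3s) and y = (sin k₂ + sin(k₁+k₂))/(3s). Then x² − x·y + y² ≤ 1/2. -/
open Real

theorem triangular_orbit_in_ellipse (k₁ k₂ : ℝ)
    (c s x y : ℝ)
    (hc : c = (Real.cos k₁ + Real.cos k₂ + Real.cos (k₁ + k₂)) / 3)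
    (hc2 : c ^ 2 ≠ 1)
    (hs : s = Real.sqrt (1 - c ^ 2))
    (hx : x = (Real.sin k₁ + Real.sin (k₁ + k₂)) / (3 * s))
    (hy : y = (Real.sin k₂ + Real.sin (k₁ + k₂)) / (3 * s)) :
    x ^ 2 - x * y + y ^ 2 ≤ 1 / 2 := by
  have h1 := Real.sin_sq_add_cos_sq k₁
  have h2 := Real.sin_sq_add_cos_sq k₂
  have hca := Real.cos_add k₁ k₂
  have hsa := Real.sin_add k₁ k₂
  have hb1 := Real.neg_one_le_cos k₁
  have hb2 := Real.cos_le_one k₁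
  have hb3 := Real.neg_one_le_cos k₂
  have hb4 := Real.cos_le_one k₂
  have hb5 := Real.neg_one_le_cos (k₁ + k₂)
  have hb6 := Real.cos_le_one (k₁ + k₂)
  have hcle : c ^ 2 ≤ 1 := by nlinarith [sq_nonneg (c - 1), sq_nonneg (c + 1)]
  have hclt : c ^ 2 < 1 := lt_of_le_of_ne hcle hc2
  have hspos : 0 < s := by rw [hs]; exact Real.sqrt_pos.2 (by linarith)
  have hs2 : s ^ 2 = 1 - c ^ 2 := by rw [hs]; exact Real.sq_sqrt (by linarith)
  set A := Real.sin k₁ + Real.sin (k₁ + k₂) with hA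
  set B := Real.sin k₂ + Real.sin (k₁ + k₂) with hB
  clear_value A B
  have iden : 9 * (1 - c ^ 2) - 2 * (A ^ 2 - A * B + B ^ 2) =
      2 * ((1 - Real.cos k₁ * Real.cos k₂) * (1 - Real.cos (k₁ + k₂))
        + (1 - Real.cos k₁) * (1 - Real.cos k₂)) := by
    rw [hA, hB, hc, hca, hsa]
    linear_combination
      (-(1:ℝ) - 2 * Real.sin k₂ ^ 2 - 2 * Real.cos k₂ - 3 * Real.cos k₂ ^ 2) * h1 +
      (-(4:ℝ) + Real.sin k₁ ^ 2 - 2 * Real.cos k₁) * h2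
  have hprod1 : 0 ≤ (1 - Real.cos k₁ * Real.cos k₂) * (1 - Real.cos (k₁ + k₂)) := by
    apply mul_nonneg _ (by linarith)
    nlinarith
  have hprod2 : 0 ≤ (1 - Real.cos k₁) * (1 - Real.cos k₂) :=
    mul_nonneg (by linarith) (by linarith)
  have key : 2 * (A ^ 2 - A * B + B ^ 2) ≤ 9 * s ^ 2 := by
    rw [hs2]; linarith
  have h3s : (3 * s) ^ 2 = 9 * s ^ 2 := by ring
  rw [hx, hy]
  have expand : (A / (3 * s)) ^ 2 - A / (3 * s) * (B / (3 * s)) + (B / (3 * s)) ^ 2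
      = (A ^ 2 - A * B + B ^ 2) / (9 * s ^ 2) := by
    field_simp
    ring
  rw [expand, div_le_iff₀ (show (0:ℝ) < 9 * s ^ 2 by positivity)]
  linarith
end

section
/- For all real numbers k₁, k₂, let a = |1 + e^{ik₁} + e^{ik₂}|/3 (modulus of a complex number) and suppose 0 < a < 1. Set D = 2a√(1 − a²), x = (2/9)(sin k₁ + sin(k₁−k₂))/D and y = (2/9)(sin k₂ + sin(k₂−k₁))/D. Then x² + x·y + y² ≤ 1/6. -/
set_option maxHeartbeats 1000000

theorem hexagonal_orbit_in_ellipse (k₁ k₂ : ℝ)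
    (a D x y : ℝ)
    (ha : a = ‖(1 + Complex.exp (k₁ * Complex.I) + Complex.exp (k₂ * Complex.I) : ℂ)‖ / 3)
    (ha0 : 0 < a) (ha1 : a < 1)
    (hD : D = 2 * a * Real.sqrt (1 - a ^ 2))
    (hx : x = (2 / 9) * (Real.sin k₁ + Real.sin (k₁ - k₂)) / D)
    (hy : y = (2 / 9) * (Real.sin k₂ + Real.sin (k₂ - k₁)) / D) :
    x ^ 2 + x * y + y ^ 2 ≤ 1 / 6 := by
  set c1 := Real.cos k₁ with hc1
  set u1 := Real.sin k₁ with hu1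
  set c2 := Real.cos k₂ with hc2
  set u2 := Real.sin k₂ with hu2
  have h1 : u1 ^ 2 + c1 ^ 2 = 1 := Real.sin_sq_add_cos_sq k₁
  have h2 : u2 ^ 2 + c2 ^ 2 = 1 := Real.sin_sq_add_cos_sq k₂
  -- v, w, s
  set v := c1 * c2 - u1 * u2 with hv
  set w := c1 * c2 + u1 * u2 with hw
  set s := c1 + c2 with hs
  have hvcos : v = Real.cos (k₁ + k₂) := (Real.cos_add k₁ k₂).symm
  have hwcos : w = Real.cos (k₁ - k₂) := by
    rw [Real.cos_sub]
  have hv2 : v ≤ 1 := hvcos ▸ Real.cos_le_one _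
  have hw2 : w ≤ 1 := hwcos ▸ Real.cos_le_one _
  have hsvw : s ^ 2 = (1 + v) * (1 + w) := by
    rw [hv, hw, hs]
    linear_combination u2 ^ 2 * h1 + (1 - c1 ^ 2) * h2
  have hE3 : 0 ≤ 2 + 2 * w ^ 2 + 2 * w * v - w - v - 2 * s * w := by
    nlinarith [sq_nonneg (s - 2 * w),
      mul_nonneg (sub_nonneg.2 hv2) (sub_nonneg.2 hw2), hsvw]
  -- modulus computation
  set z := 1 + Complex.exp (k₁ * Complex.I) + Complex.exp (k₂ * Complex.I) with hz
  have hre : z.re = 1 + c1 + c2 := by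
    simp [hz, Complex.add_re, Complex.exp_ofReal_mul_I_re, hc1, hc2]
  have him : z.im = u1 + u2 := by
    simp [hz, Complex.add_im, Complex.exp_ofReal_mul_I_im, hu1, hu2]
  have hN2 : 9 * a ^ 2 = (1 + c1 + c2) ^ 2 + (u1 + u2) ^ 2 := by
    have habs2 : ‖z‖ ^ 2 = (1 + c1 + c2) ^ 2 + (u1 + u2) ^ 2 := by
      rw [Complex.sq_norm, Complex.normSq_apply, hre, him]; ring
    rw [ha]
    linear_combination habs2
  -- D
  have ha2 : (0:ℝ) ≤ 1 - a ^ 2 := by nlinarith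
  have hD2 : D ^ 2 = 4 * a ^ 2 * (1 - a ^ 2) := by
    rw [hD, mul_pow, mul_pow, Real.sq_sqrt ha2]; ring
  have hDpos : 0 < D := by
    rw [hD]
    have : 0 < Real.sqrt (1 - a ^ 2) := Real.sqrt_pos.2 (by nlinarith)
    positivity
  -- sine differences
  have hs12 : Real.sin (k₁ - k₂) = u1 * c2 - c1 * u2 := Real.sin_sub k₁ k₂
  have hs21 : Real.sin (k₂ - k₁) = u2 * c1 - c2 * u1 := Real.sin_sub k₂ k₁
  set s1 := u1 + (u1 * c2 - c1 * u2) with hs1d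
  set s2 := u2 + (u2 * c1 - c2 * u1) with hs2d
  set N := (1 + c1 + c2) ^ 2 + (u1 + u2) ^ 2 with hNd
  have hid : N * (9 - N) - 6 * (s1 ^ 2 + s1 * s2 + s2 ^ 2)
      = 2 + 2 * w ^ 2 + 2 * w * v - w - v - 2 * s * w := by
    rw [hNd, hs1d, hs2d, hv, hw, hs]
    linear_combination
      (2 - 8 * u2 ^ 2 - 10 * c2 - 10 * c2 ^ 2 - 4 * u1 * u2 - u1 ^ 2 - 4 * c1
        - 4 * c1 * c2 - c1 ^ 2) * h1 +
      (-8 - u2 ^ 2 - 4 * c2 - c2 ^ 2 - 4 * u1 * u2 + 2 * u1 ^ 2 - 10 * c1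
        - 4 * c1 * c2) * h2
  have hD3 : 81 * D ^ 2 = 4 * N * (9 - N) := by
    rw [hD2]
    linear_combination (36 - 4 * N - 36 * a ^ 2) * hN2
  set A := (2 / 9) * (u1 + (u1 * c2 - c1 * u2)) with hA
  set B := (2 / 9) * (u2 + (u2 * c1 - c2 * u1)) with hB
  have hkey : 6 * (A ^ 2 + A * B + B ^ 2) ≤ D ^ 2 := by
    have e1 : 81 * (6 * (A ^ 2 + A * B + B ^ 2)) = 24 * (s1 ^ 2 + s1 * s2 + s2 ^ 2) := by
      rw [hA, hB, hs1d, hs2d]; ring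
    linarith [hid, hE3, hD3, e1]
  have hxD : x * D = A := by
    rw [hx, hs12, hA]
    field_simp
  have hyD : y * D = B := by
    rw [hy, hs21, hB]
    field_simp
  have hD2pos : 0 < D ^ 2 := by positivity
  have hk2 : (6 * (x ^ 2 + x * y + y ^ 2)) * D ^ 2 ≤ 1 * D ^ 2 := by
    have e2 : (6 * (x ^ 2 + x * y + y ^ 2)) * D ^ 2
        = 6 * ((x * D) ^ 2 + (x * D) * (y * D) + (y * D) ^ 2) := by ring
    rw [e2, hxD, hyD]
    linarith [hkey]
  have := le_of_mul_le_mul_right hk2 hD2pos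
  linarith
end

section
/- For all real numbers k₁, k₂, let a = |1 + e^{ik₁} + e^{ik₂}|/3 and suppose 0 < a < 1. Set D = 2a√(1 − a²), x = (2/9)(sin k₁ + sin(k₁−k₂))/D, y = (2/9)(sin k₂ + sin(k₂−k₁))/D, and g = √3·√((1 + a)/(5 + 3a)). Then u = g·(x − y)/√2 and v = g·(x + y)/√2 satisfy u² + 3v² ≤ 1/4. -/
set_option maxHeartbeats 1000000

theorem core_mc (m C : ℝ) (hm : m^2 ≤ 1) (hC : C^2 ≤ 1) :
    0 ≤ 8 - 14*C^2 + 8*C^4 + 4*m*C - 8*m*C^3 - 6*m^2 + 8*m^2*C^2 := by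
  nlinarith [sq_nonneg ((C-1)*(2*C+1)), sq_nonneg ((C+1)*(2*C-1)), sq_nonneg (1-m^2),
    sq_nonneg (1-C^2), mul_nonneg (mul_nonneg (sub_nonneg.2 hm) (sub_nonneg.2 hC)) (sub_nonneg.2 hC),
    sq_nonneg (m-C), sq_nonneg (m+C), sq_nonneg (m*C-1), sq_nonneg (m - 2*C^3 + C),
    sq_nonneg (m + 2*C^3 - C), mul_nonneg (sub_nonneg.2 hm) (sub_nonneg.2 hC),
    sq_nonneg (2*C^2-1), sq_nonneg m, sq_nonneg C]

theorem key_trig (k₁ k₂ : ℝ) :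
    6*(Real.sin k₁^2 + Real.sin k₂^2 + Real.sin (k₁-k₂)^2 + Real.sin k₁*Real.sin k₂
       + Real.sin k₁*Real.sin (k₁-k₂) - Real.sin k₂*Real.sin (k₁-k₂))
    ≤ 9*(3+2*(Real.cos k₁+Real.cos k₂+Real.cos k₁*Real.cos k₂+Real.sin k₁*Real.sin k₂))
      - (3+2*(Real.cos k₁+Real.cos k₂+Real.cos k₁*Real.cos k₂+Real.sin k₁*Real.sin k₂))^2 := by
  set A := (k₁+k₂)/2 with hA'
  set B := (k₁-k₂)/2 with hB'
  have h1 : Real.sin k₁ = Real.sin A * Real.cos B + Real.cos A * Real.sin B := by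
    rw [show k₁ = A + B by rw [hA', hB']; ring, Real.sin_add]
  have h2 : Real.sin k₂ = Real.sin A * Real.cos B - Real.cos A * Real.sin B := by
    rw [show k₂ = A - B by rw [hA', hB']; ring, Real.sin_sub]
  have h3 : Real.cos k₁ = Real.cos A * Real.cos B - Real.sin A * Real.sin B := by
    rw [show k₁ = A + B by rw [hA', hB']; ring, Real.cos_add]
  have h4 : Real.cos k₂ = Real.cos A * Real.cos B + Real.sin A * Real.sin B := by
    rw [show k₂ = A - B by rw [hA', hB']; ring, Real.cos_sub]
  have h5 : Real.sin (k₁-k₂) = Real.sin B * Real.cos B + Real.cos B * Real.sin B := by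
    rw [show k₁ - k₂ = B + B by rw [hB']; ring, Real.sin_add]
  rw [h1, h2, h3, h4, h5]
  have hA := Real.sin_sq_add_cos_sq A
  have hB := Real.sin_sq_add_cos_sq B
  set m := Real.cos A
  set n := Real.sin A
  set C := Real.cos B
  set S := Real.sin B
  have hm : m^2 ≤ 1 := by nlinarith [sq_nonneg n]
  have hC : C^2 ≤ 1 := by nlinarith [sq_nonneg S]
  have hcore := core_mc m C hm hC
  have hid : 9*(3+2*((m*C - n*S)+(m*C + n*S)+(m*C - n*S)*(m*C + n*S)+(n*C + m*S)*(n*C - m*S)))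
      - (3+2*((m*C - n*S)+(m*C + n*S)+(m*C - n*S)*(m*C + n*S)+(n*C + m*S)*(n*C - m*S)))^2
      - 6*((n*C + m*S)^2 + (n*C - m*S)^2 + (S*C + C*S)^2 + (n*C + m*S)*(n*C - m*S)
       + (n*C + m*S)*(S*C + C*S) - (n*C - m*S)*(S*C + C*S))
      = 8 - 14*C^2 + 8*C^4 + 4*m*C - 8*m*C^3 - 6*m^2 + 8*m^2*C^2 := by
    linear_combination (-6*S^2 - 4*S^4 - 12*C^2 + 8*C^2*S^2 - 4*C^4 - 4*n^2*S^4 + 8*n^2*C^2*S^2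
      - 4*n^2*C^4 + 16*m*C*S^2 - 16*m*C^3 - 4*m^2*S^4 + 8*m^2*C^2*S^2 - 4*m^2*C^4) * hA
      + (-10 - 4*S^2 - 12*C^2 - 8*m*C - 6*m^2) * hB
  linarith [hcore, hid]

theorem kagome_orbit_in_ellipse (k₁ k₂ : ℝ)
    (a D x y g u v : ℝ)
    (ha : a = ‖1 + Complex.exp (k₁ * Complex.I) + Complex.exp (k₂ * Complex.I)‖ / 3)
    (ha0 : 0 < a) (ha1 : a < 1)
    (hD : D = 2 * a * Real.sqrt (1 - a ^ 2))
    (hx : x = (2 / 9) * (Real.sin k₁ + Real.sin (k₁ - k₂)) / D)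
    (hy : y = (2 / 9) * (Real.sin k₂ + Real.sin (k₂ - k₁)) / D)
    (hg : g = Real.sqrt 3 * Real.sqrt ((1 + a) / (5 + 3 * a)))
    (hu : u = g * (x - y) / Real.sqrt 2)
    (hv : v = g * (x + y) / Real.sqrt 2) :
    u ^ 2 + 3 * v ^ 2 ≤ 1 / 4 := by
  -- basic positivity
  have h1a : (0:ℝ) < 1 + a := by linarith
  have h1ma : (0:ℝ) < 1 - a := by linarith
  have h1a2 : (0:ℝ) < 1 - a^2 := by nlinarith
  have h5 : (0:ℝ) < 5 + 3*a := by linarith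
  have hsq : 0 < Real.sqrt (1 - a^2) := Real.sqrt_pos.2 h1a2
  have hD0 : 0 < D := by rw [hD]; positivity
  have hD2 : D^2 = 4*a^2*(1 - a^2) := by
    rw [hD, mul_pow, mul_pow, Real.sq_sqrt h1a2.le]; ring
  have hg2 : g^2 = 3*((1+a)/(5+3*a)) := by
    rw [hg, mul_pow, Real.sq_sqrt (by norm_num : (0:ℝ) ≤ 3),
      Real.sq_sqrt (by positivity : (0:ℝ) ≤ (1+a)/(5+3*a))]
  -- 9 a^2 in trig form
  have habs : ‖1 + Complex.exp (k₁ * Complex.I) + Complex.exp (k₂ * Complex.I)‖ = 3*a := by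
    rw [ha]; ring
  have h2 : (3*a)^2 = Complex.normSq (1 + Complex.exp (k₁ * Complex.I) + Complex.exp (k₂ * Complex.I)) := by
    rw [← habs, Complex.sq_norm]
  have hre : (1 + Complex.exp (k₁ * Complex.I) + Complex.exp (k₂ * Complex.I)).re
      = 1 + Real.cos k₁ + Real.cos k₂ := by
    simp [Complex.exp_ofReal_mul_I_re]
  have him : (1 + Complex.exp (k₁ * Complex.I) + Complex.exp (k₂ * Complex.I)).im
      = Real.sin k₁ + Real.sin k₂ := by
    simp [Complex.exp_ofReal_mul_I_im]
  rw [Complex.normSq_apply, hre, him] at h2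
  have p1 := Real.sin_sq_add_cos_sq k₁
  have p2 := Real.sin_sq_add_cos_sq k₂
  have hQ : 9*a^2 = 3+2*(Real.cos k₁+Real.cos k₂+Real.cos k₁*Real.cos k₂+Real.sin k₁*Real.sin k₂) := by
    linear_combination h2 + p1 + p2
  have hkey := key_trig k₁ k₂
  rw [← hQ] at hkey
  -- abbreviations
  set s1 := Real.sin k₁ with hs1
  set s2 := Real.sin k₂ with hs2
  set s12 := Real.sin (k₁ - k₂) with hs12
  -- x ± y
  have hsin21 : Real.sin (k₂ - k₁) = -s12 := by
    rw [show k₂ - k₁ = -(k₁ - k₂) by ring, Real.sin_neg]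
  have hxy : x - y = (2/9)*(s1 - s2 + 2*s12)/D := by
    rw [hx, hy, hsin21]; ring
  have hxy2 : x + y = (2/9)*(s1 + s2)/D := by
    rw [hx, hy, hsin21]; ring
  have hu2 : u^2 = g^2*(x-y)^2/2 := by
    rw [hu, div_pow, mul_pow, Real.sq_sqrt (by norm_num : (0:ℝ) ≤ 2)]
  have hv2 : v^2 = g^2*(x+y)^2/2 := by
    rw [hv, div_pow, mul_pow, Real.sq_sqrt (by norm_num : (0:ℝ) ≤ 2)]
  have hxys : (x-y)^2 = (4/81)*(s1 - s2 + 2*s12)^2 / (4*a^2*(1-a^2)) := by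
    rw [hxy, div_pow, hD2]; ring_nf
  have hxys2 : (x+y)^2 = (4/81)*(s1 + s2)^2 / (4*a^2*(1-a^2)) := by
    rw [hxy2, div_pow, hD2]; ring_nf
  have ha' : a ≠ 0 := ha0.ne'
  have h1a2' : (1 - a^2) ≠ 0 := h1a2.ne'
  have h5' : (5 + 3*a) ≠ 0 := h5.ne'
  have heq : u^2 + 3*v^2
      = ((1+a) * ((s1 - s2 + 2*s12)^2 + 3*(s1 + s2)^2)) / (54 * ((5+3*a) * (a^2 * (1-a^2)))) := by
    rw [hu2, hv2, hg2, hxys, hxys2]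
    field_simp
    ring
  rw [heq, div_le_iff₀ (by positivity)]
  have hF : (s1 - s2 + 2*s12)^2 + 3*(s1 + s2)^2
      = 4*(s1^2 + s2^2 + s12^2 + s1*s2 + s1*s12 - s2*s12) := by ring
  rw [hF]
  calc (1+a) * (4*(s1^2 + s2^2 + s12^2 + s1*s2 + s1*s12 - s2*s12))
      ≤ (1+a) * ((2/3)*(9*(9*a^2) - (9*a^2)^2)) := by
        apply mul_le_mul_of_nonneg_left _ h1a.le
        linarith [hkey]
    _ ≤ 1/4 * (54 * ((5+3*a) * (a^2 * (1-a^2)))) := by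
        have hnn : 0 ≤ a^2 * ((1-a^2) * (1-a)) :=
          mul_nonneg (sq_nonneg a) (mul_nonneg h1a2.le h1ma.le)
        have hstep : 1/4 * (54 * ((5+3*a) * (a^2 * (1-a^2))))
            - (1+a) * ((2/3)*(9*(9*a^2) - (9*a^2)^2)) = (27/2) * (a^2 * ((1-a^2) * (1-a))) := by
          ring
        linarith [hstep, hnn]
end

section
/- Let ũ(r) = (3 + 3r)/(√12·√(1 + r + r²)) and ṽ(r) = (r − 1)/(√12·√(1 + r + r²)) for r ∈ ℝ. Then {ũ(r) : r ∈ ℝ} ∪ {−ũ(r) : r ∈ ℝ} = [−1, 1] and {ṽ(r) : r ∈ ℝ} ∪ {−ṽ(r) : r ∈ ℝ} = [−1/√3, 1/√3]. -/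
private lemma quad_pos (r : ℝ) : 0 < 1 + r + r ^ 2 := by nlinarith [sq_nonneg (2*r+1)]

private lemma denom_pos (r : ℝ) : 0 < Real.sqrt 12 * Real.sqrt (1 + r + r ^ 2) :=
  mul_pos (Real.sqrt_pos.mpr (by norm_num)) (Real.sqrt_pos.mpr (quad_pos r))

private lemma denom_eq (r : ℝ) : Real.sqrt 12 * Real.sqrt (1 + r + r ^ 2)
    = Real.sqrt (12 * (1 + r + r ^ 2)) := (Real.sqrt_mul (by norm_num) _).symm

private lemma u_abs_le (r : ℝ) :
    |(3 + 3 * r) / (Real.sqrt 12 * Real.sqrt (1 + r + r ^ 2))| ≤ 1 := by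
  rw [abs_div, abs_of_pos (denom_pos r), div_le_one (denom_pos r), denom_eq,
    ← Real.sqrt_sq_eq_abs]
  apply Real.sqrt_le_sqrt
  nlinarith [sq_nonneg (r - 1)]

private lemma v_abs_le (r : ℝ) :
    |(r - 1) / (Real.sqrt 12 * Real.sqrt (1 + r + r ^ 2))| ≤ 1 / Real.sqrt 3 := by
  rw [abs_div, abs_of_pos (denom_pos r),
    div_le_div_iff₀ (denom_pos r) (Real.sqrt_pos.mpr (by norm_num : (0:ℝ) < 3)),
    one_mul, denom_eq]
  have h : |r - 1| * Real.sqrt 3 = Real.sqrt (3 * (r - 1) ^ 2) := by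
    rw [Real.sqrt_mul (by norm_num), Real.sqrt_sq_eq_abs]; ring
  rw [h]
  apply Real.sqrt_le_sqrt
  nlinarith [sq_nonneg (r + 1)]

private lemma ucont : Continuous fun r : ℝ =>
    (3 + 3 * r) / (Real.sqrt 12 * Real.sqrt (1 + r + r ^ 2)) := by
  apply Continuous.div (by continuity)
  · exact continuous_const.mul (Real.continuous_sqrt.comp (by continuity))
  · exact fun r => (denom_pos r).ne'

private lemma vcont : Continuous fun r : ℝ =>
    (r - 1) / (Real.sqrt 12 * Real.sqrt (1 + r + r ^ 2)) := by
  apply Continuous.div (by continuity)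
  · exact continuous_const.mul (Real.continuous_sqrt.comp (by continuity))
  · exact fun r => (denom_pos r).ne'

private lemma sqrt3_pos : (0:ℝ) < Real.sqrt 3 := Real.sqrt_pos.mpr (by norm_num)

theorem triangular_limit_coordinate_ranges :
    ({u : ℝ | ∃ r : ℝ, u = (3 + 3 * r) / (Real.sqrt 12 * Real.sqrt (1 + r + r ^ 2))} ∪
      {u : ℝ | ∃ r : ℝ, u = -((3 + 3 * r) / (Real.sqrt 12 * Real.sqrt (1 + r + r ^ 2)))}
        = Set.Icc (-1 : ℝ) 1) ∧
    ({v : ℝ | ∃ r : ℝ, v = (r - 1) / (Real.sqrt 12 * Real.sqrt (1 + r + r ^ 2))} ∪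
      {v : ℝ | ∃ r : ℝ, v = -((r - 1) / (Real.sqrt 12 * Real.sqrt (1 + r + r ^ 2)))}
        = Set.Icc (-(1 / Real.sqrt 3)) (1 / Real.sqrt 3)) := by
  set f : ℝ → ℝ := fun r => (3 + 3 * r) / (Real.sqrt 12 * Real.sqrt (1 + r + r ^ 2)) with hf
  set g : ℝ → ℝ := fun r => (r - 1) / (Real.sqrt 12 * Real.sqrt (1 + r + r ^ 2)) with hg
  have hfm1 : f (-1) = 0 := by simp [hf]
  have hf1 : f 1 = 1 := by
    have : Real.sqrt 12 * Real.sqrt (1 + 1 + (1:ℝ) ^ 2) = 6 := by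
      rw [denom_eq, show (12 * (1 + 1 + (1:ℝ) ^ 2)) = 6 ^ 2 by norm_num,
        Real.sqrt_sq (by norm_num)]
    simp only [hf]
    rw [this]; norm_num
  have hgm1 : g (-1) = -(1 / Real.sqrt 3) := by
    have h12 : Real.sqrt 12 = 2 * Real.sqrt 3 := by
      rw [show (12:ℝ) = 2 ^ 2 * 3 by norm_num, Real.sqrt_mul (by positivity),
        Real.sqrt_sq (by norm_num)]
    simp only [hg]
    rw [show (1 + (-1) + (-1:ℝ) ^ 2) = 1 by norm_num, Real.sqrt_one, h12]
    field_simp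
    ring
  have hg1 : g 1 = 0 := by simp [hg]
  have hIVTf : Set.Icc (0:ℝ) 1 ⊆ f '' Set.Icc (-1) 1 := by
    have h : Set.Icc (f (-1)) (f 1) ⊆ f '' Set.Icc (-1) 1 :=
      intermediate_value_Icc (by norm_num : (-1:ℝ) ≤ 1) ucont.continuousOn
    rwa [hfm1, hf1] at h
  have hIVTg : Set.Icc (-(1 / Real.sqrt 3)) 0 ⊆ g '' Set.Icc (-1) 1 := by
    have h : Set.Icc (g (-1)) (g 1) ⊆ g '' Set.Icc (-1) 1 :=
      intermediate_value_Icc (by norm_num : (-1:ℝ) ≤ 1) vcont.continuousOn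
    rwa [hgm1, hg1] at h
  constructor
  · ext u
    constructor
    · rintro (⟨r, hr⟩ | ⟨r, hr⟩) <;>
      · rw [Set.mem_Icc, hr]
        have := abs_le.mp (u_abs_le r)
        constructor <;> linarith [this.1, this.2]
    · intro hu
      rw [Set.mem_Icc] at hu
      by_cases h : 0 ≤ u
      · obtain ⟨r, _, hr⟩ := hIVTf ⟨h, hu.2⟩
        exact Or.inl ⟨r, hr.symm⟩
      · have hmem : -u ∈ Set.Icc (0:ℝ) 1 := by
          rw [Set.mem_Icc]; constructor <;> linarith
        obtain ⟨r, _, hr⟩ := hIVTf hmem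
        refine Or.inr ⟨r, ?_⟩
        show u = -(f r)
        rw [hr]; ring
  · ext v
    constructor
    · rintro (⟨r, hr⟩ | ⟨r, hr⟩) <;>
      · rw [Set.mem_Icc, hr]
        have := abs_le.mp (v_abs_le r)
        constructor <;> linarith [this.1, this.2]
    · intro hv
      rw [Set.mem_Icc] at hv
      by_cases h : v ≤ 0
      · obtain ⟨r, _, hr⟩ := hIVTg ⟨hv.1, h⟩
        exact Or.inl ⟨r, hr.symm⟩
      · have hmem : -v ∈ Set.Icc (-(1 / Real.sqrt 3)) 0 := by
          rw [Set.mem_Icc]; constructor <;> linarith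
        obtain ⟨r, _, hr⟩ := hIVTg hmem
        refine Or.inr ⟨r, ?_⟩
        show v = -(g r)
        rw [hr]; ring
end

section
/- For all real numbers k₁, k₂, writing s₁ = sin k₁, s₂ = sin k₂, s₁₂ = sin(k₁+k₂), c₁ = cos k₁, c₂ = cos k₂, c₁₂ = cos(k₁+k₂), the identity (s₁ + s₂ + 2s₁₂)² + 3(s₂ − s₁)² + 2(c₁ + c₂ + c₁₂)² − 18 = −2[(1 − c₁)² + (1 − c₂)² + (1 − c₁₂)²] holds; in particular (s₁ + s₂ + 2s₁₂)² + 3(s₂ − s₁)² ≤ 18 − 2(c₁ + c₂ + c₁₂)². -/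
theorem triangular_key_identity (k₁ k₂ : ℝ) :
    ((Real.sin k₁ + Real.sin k₂ + 2 * Real.sin (k₁ + k₂)) ^ 2 +
        3 * (Real.sin k₂ - Real.sin k₁) ^ 2 +
        2 * (Real.cos k₁ + Real.cos k₂ + Real.cos (k₁ + k₂)) ^ 2 - 18 =
      -2 * ((1 - Real.cos k₁) ^ 2 + (1 - Real.cos k₂) ^ 2 +
        (1 - Real.cos (k₁ + k₂)) ^ 2)) ∧
    (Real.sin k₁ + Real.sin k₂ + 2 * Real.sin (k₁ + k₂)) ^ 2 +
        3 * (Real.sin k₂ - Real.sin k₁) ^ 2 ≤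
      18 - 2 * (Real.cos k₁ + Real.cos k₂ + Real.cos (k₁ + k₂)) ^ 2 := by
  have h1 := Real.sin_sq_add_cos_sq k₁
  have h2 := Real.sin_sq_add_cos_sq k₂
  have key : (Real.sin k₁ + Real.sin k₂ + 2 * Real.sin (k₁ + k₂)) ^ 2 +
        3 * (Real.sin k₂ - Real.sin k₁) ^ 2 +
        2 * (Real.cos k₁ + Real.cos k₂ + Real.cos (k₁ + k₂)) ^ 2 - 18 =
      -2 * ((1 - Real.cos k₁) ^ 2 + (1 - Real.cos k₂) ^ 2 +
        (1 - Real.cos (k₁ + k₂)) ^ 2) := by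
    rw [Real.sin_add, Real.cos_add]
    linear_combination (4 + 4 * Real.cos k₂ + 4 * Real.cos k₂ ^ 2 +
        4 * Real.sin k₂ ^ 2) * h1 + (8 + 4 * Real.cos k₁) * h2
  refine ⟨key, ?_⟩
  nlinarith [key, sq_nonneg (1 - Real.cos k₁), sq_nonneg (1 - Real.cos k₂),
    sq_nonneg (1 - Real.cos (k₁ + k₂))]
end

section
/- Let ũ(r) = (1 − r)/(2√(1 − r + r²)) and ṽ(r) = (1 + r)/(6√(1 − r + r²)) for r ∈ ℝ. Then {ũ(r) : r ∈ ℝ} ∪ {−ũ(r) : r ∈ ℝ} = [−1/√3, 1/√3] and {ṽ(r) : r ∈ ℝ} ∪ {−ṽ(r) : r ∈ ℝ} = [−1/3, 1/3]; moreover the closure of {ε·(ũ(r), ṽ(r)) : r ∈ ℝ, ε ∈ {1,−1}} equals the ellipse {(u,v) ∈ ℝ² : 3u² + 9v² = 1}. -/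
open Real Filter

private lemma qpos (r : ℝ) : 0 < 1 - r + r ^ 2 := by nlinarith [sq_nonneg (2*r - 1)]

noncomputable def uf (r : ℝ) : ℝ := (1 - r) / (2 * Real.sqrt (1 - r + r ^ 2))
noncomputable def vf (r : ℝ) : ℝ := (1 + r) / (6 * Real.sqrt (1 - r + r ^ 2))

private lemma sqrtq_pos (r : ℝ) : 0 < Real.sqrt (1 - r + r ^ 2) :=
  Real.sqrt_pos.2 (qpos r)

private lemma sqrtq_sq (r : ℝ) : (Real.sqrt (1 - r + r ^ 2)) ^ 2 = 1 - r + r ^ 2 :=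
  Real.sq_sqrt (qpos r).le

private lemma uf_cont : Continuous uf := by
  apply Continuous.div (by continuity)
  · exact continuous_const.mul (Real.continuous_sqrt.comp (by continuity))
  · intro r
    have := sqrtq_pos r
    positivity

private lemma vf_cont : Continuous vf := by
  apply Continuous.div (by continuity)
  · exact continuous_const.mul (Real.continuous_sqrt.comp (by continuity))
  · intro r
    have := sqrtq_pos r
    positivity

private lemma uf_one : uf 1 = 0 := by simp [uf]

private lemma uf_neg_one : uf (-1) = 1 / Real.sqrt 3 := by
  have h3 : (1:ℝ) - (-1) + (-1)^2 = 3 := by norm_num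
  rw [uf, h3]
  rw [div_eq_div_iff (by positivity) (by positivity)]
  ring

private lemma vf_one : vf 1 = 1 / 3 := by
  have h3 : (1:ℝ) - 1 + 1^2 = 1 := by norm_num
  rw [vf, h3, Real.sqrt_one]
  norm_num

private lemma vf_neg_one : vf (-1) = 0 := by simp [vf]

private lemma uf_zero : uf 0 = 1 / 2 := by simp [uf]

private lemma vf_zero : vf 0 = 1 / 6 := by simp [vf]

-- bounds
private lemma uf_bound (r : ℝ) : (uf r) ^ 2 ≤ 1 / 3 := by
  have hs := sqrtq_sq r
  have hp := sqrtq_pos r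
  rw [uf, div_pow]
  rw [div_le_div_iff₀ (by positivity) (by norm_num)]
  nlinarith [sq_nonneg (r + 1)]

private lemma vf_bound (r : ℝ) : (vf r) ^ 2 ≤ 1 / 9 := by
  have hs := sqrtq_sq r
  have hp := sqrtq_pos r
  rw [vf, div_pow]
  rw [div_le_div_iff₀ (by positivity) (by norm_num)]
  nlinarith [sq_nonneg (r - 1)]

private lemma abs_of_sq (x c : ℝ) (hc : 0 ≤ c) (h : x ^ 2 ≤ c ^ 2) : -c ≤ x ∧ x ≤ c := by
  constructor <;> nlinarith [sq_nonneg (x - c), sq_nonneg (x + c)]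

private lemma inv_sqrt3_sq : (1 / Real.sqrt 3) ^ 2 = 1 / 3 := by
  rw [div_pow, Real.sq_sqrt (by norm_num : (3:ℝ) ≥ 0)]
  norm_num

-- surjectivity onto [0, max]
private lemma uf_surj {u : ℝ} (h0 : 0 ≤ u) (h1 : u ≤ 1 / Real.sqrt 3) : ∃ r, uf r = u := by
  have h := intermediate_value_Icc' (by norm_num : (-1:ℝ) ≤ 1) uf_cont.continuousOn
  rw [uf_one, uf_neg_one] at h
  obtain ⟨r, _, hr⟩ := h ⟨h0, h1⟩
  exact ⟨r, hr⟩

private lemma vf_surj {v : ℝ} (h0 : 0 ≤ v) (h1 : v ≤ 1 / 3) : ∃ r, vf r = v := by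
  have h := intermediate_value_Icc (by norm_num : (-1:ℝ) ≤ 1) vf_cont.continuousOn
  rw [vf_one, vf_neg_one] at h
  obtain ⟨r, _, hr⟩ := h ⟨h0, h1⟩
  exact ⟨r, hr⟩

private lemma on_ellipse (r : ℝ) : 3 * (uf r) ^ 2 + 9 * (vf r) ^ 2 = 1 := by
  have hs := sqrtq_sq r
  have hp := sqrtq_pos r
  rw [uf, vf, div_pow, div_pow]
  field_simp
  nlinarith [hs]

private lemma find_r {u v : ℝ} (he : 3 * u ^ 2 + 9 * v ^ 2 = 1) (hpos : 0 < u + 3 * v) :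
    ∃ r, uf r = u ∧ vf r = v := by
  set a := u + 3 * v with ha
  refine ⟨(3 * v - u) / a, ?_, ?_⟩ <;>
  · have hq : 1 - (3 * v - u) / a + ((3 * v - u) / a) ^ 2 = (1 / a) ^ 2 := by
      field_simp
      linear_combination he
    have hsq : Real.sqrt (1 - (3 * v - u) / a + ((3 * v - u) / a) ^ 2) = 1 / a := by
      rw [hq, Real.sqrt_sq (by positivity)]
    simp only [uf, vf, hsq]
    field_simp
    ring

private lemma uf_inv {r : ℝ} (hr : 0 < r) : uf (1 / r) = - uf r := by
  have hq : 1 - 1 / r + (1 / r) ^ 2 = (1 - r + r ^ 2) * (1 / r) ^ 2 := by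
    field_simp; ring
  have hsq : Real.sqrt (1 - 1 / r + (1 / r) ^ 2)
      = Real.sqrt (1 - r + r ^ 2) * (1 / r) := by
    rw [hq, Real.sqrt_mul (qpos r).le, Real.sqrt_sq (by positivity)]
  have hp := sqrtq_pos r
  rw [uf, uf, hsq]
  field_simp
  ring

private lemma vf_inv {r : ℝ} (hr : 0 < r) : vf (1 / r) = vf r := by
  have hq : 1 - 1 / r + (1 / r) ^ 2 = (1 - r + r ^ 2) * (1 / r) ^ 2 := by
    field_simp; ring
  have hsq : Real.sqrt (1 - 1 / r + (1 / r) ^ 2)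
      = Real.sqrt (1 - r + r ^ 2) * (1 / r) := by
    rw [hq, Real.sqrt_mul (qpos r).le, Real.sqrt_sq (by positivity)]
  have hp := sqrtq_pos r
  rw [vf, vf, hsq]
  field_simp
  ring

private lemma tendsto_uf : Tendsto uf atTop (nhds (-(1/2) : ℝ)) := by
  have h1 : Tendsto (fun r : ℝ => 1 / r) atTop (nhds 0) := by
    simpa [one_div] using (tendsto_inv_atTop_zero : Tendsto (fun r : ℝ => r⁻¹) atTop (nhds 0))
  have h2 : Tendsto (fun r : ℝ => -uf (1 / r)) atTop (nhds (-(1/2) : ℝ)) := by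
    have h3 := ((uf_cont.tendsto 0).comp h1).neg
    rw [uf_zero] at h3
    exact h3
  refine h2.congr' ?_
  filter_upwards [eventually_gt_atTop (0:ℝ)] with r hr
  rw [uf_inv hr, neg_neg]

private lemma tendsto_vf : Tendsto vf atTop (nhds (1/6 : ℝ)) := by
  have h1 : Tendsto (fun r : ℝ => 1 / r) atTop (nhds 0) := by
    simpa [one_div] using (tendsto_inv_atTop_zero : Tendsto (fun r : ℝ => r⁻¹) atTop (nhds 0))
  have h2 : Tendsto (fun r : ℝ => vf (1 / r)) atTop (nhds (1/6 : ℝ)) := by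
    have h3 := (vf_cont.tendsto 0).comp h1
    rw [vf_zero] at h3
    exact h3
  refine h2.congr' ?_
  filter_upwards [eventually_gt_atTop (0:ℝ)] with r hr
  rw [vf_inv hr]

theorem hexagonal_limit_points_ranges_and_closure :
    ({u : ℝ | ∃ r : ℝ, u = (1 - r) / (2 * Real.sqrt (1 - r + r ^ 2))} ∪
      {u : ℝ | ∃ r : ℝ, u = -((1 - r) / (2 * Real.sqrt (1 - r + r ^ 2)))}
        = Set.Icc (-(1 / Real.sqrt 3)) (1 / Real.sqrt 3)) ∧
    ({v : ℝ | ∃ r : ℝ, v = (1 + r) / (6 * Real.sqrt (1 - r + r ^ 2))} ∪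
      {v : ℝ | ∃ r : ℝ, v = -((1 + r) / (6 * Real.sqrt (1 - r + r ^ 2)))}
        = Set.Icc (-(1 / 3) : ℝ) (1 / 3)) ∧
    closure {p : ℝ × ℝ | ∃ r ε : ℝ, (ε = 1 ∨ ε = -1) ∧
        p = (ε * ((1 - r) / (2 * Real.sqrt (1 - r + r ^ 2))),
             ε * ((1 + r) / (6 * Real.sqrt (1 - r + r ^ 2))))} =
      {p : ℝ × ℝ | 3 * p.1 ^ 2 + 9 * p.2 ^ 2 = 1} := by
  have sqrt3_pos : (0:ℝ) < Real.sqrt 3 := Real.sqrt_pos.2 (by norm_num)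
  refine ⟨?_, ?_, ?_⟩
  · ext u
    simp only [Set.mem_union, Set.mem_setOf_eq, Set.mem_Icc]
    constructor
    · rintro (⟨r, rfl⟩ | ⟨r, rfl⟩)
      · exact abs_of_sq (uf r) _ (by positivity)
          (by rw [inv_sqrt3_sq]; exact uf_bound r)
      · exact abs_of_sq (-(uf r)) _ (by positivity)
          (by rw [inv_sqrt3_sq, neg_sq]; exact uf_bound r)
    · rintro ⟨h0, h1⟩
      rcases le_or_gt 0 u with hu | hu
      · obtain ⟨r, hr⟩ := uf_surj hu h1
        exact Or.inl ⟨r, hr.symm⟩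
      · obtain ⟨r, hr⟩ := uf_surj (neg_nonneg.2 hu.le) (by linarith)
        exact Or.inr ⟨r, by rw [show (1 - r) / (2 * Real.sqrt (1 - r + r ^ 2)) = uf r from rfl, hr, neg_neg]⟩
  · ext v
    simp only [Set.mem_union, Set.mem_setOf_eq, Set.mem_Icc]
    constructor
    · rintro (⟨r, rfl⟩ | ⟨r, rfl⟩)
      · exact abs_of_sq (vf r) (1/3) (by norm_num)
          (by norm_num; exact vf_bound r)
      · exact abs_of_sq (-(vf r)) (1/3) (by norm_num)
          (by rw [neg_sq]; norm_num; exact vf_bound r)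
    · rintro ⟨h0, h1⟩
      rcases le_or_gt 0 v with hv | hv
      · obtain ⟨r, hr⟩ := vf_surj hv h1
        exact Or.inl ⟨r, hr.symm⟩
      · obtain ⟨r, hr⟩ := vf_surj (neg_nonneg.2 hv.le) (by linarith)
        exact Or.inr ⟨r, by rw [show (1 + r) / (6 * Real.sqrt (1 - r + r ^ 2)) = vf r from rfl, hr, neg_neg]⟩
  · apply Set.Subset.antisymm
    · apply closure_minimal
      · rintro ⟨x, y⟩ ⟨r, ε, hε, hp⟩
        simp only [Prod.mk.injEq] at hp
        obtain ⟨hx, hy⟩ := hp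
        simp only [Set.mem_setOf_eq]
        rw [hx, hy,
          show (1 - r) / (2 * Real.sqrt (1 - r + r ^ 2)) = uf r from rfl,
          show (1 + r) / (6 * Real.sqrt (1 - r + r ^ 2)) = vf r from rfl]
        rcases hε with rfl | rfl <;> linear_combination on_ellipse r
      · exact isClosed_eq (by fun_prop) continuous_const
    · rintro ⟨u, v⟩ hp
      simp only [Set.mem_setOf_eq] at hp ⊢
      have memS : ∀ r : ℝ, (uf r, vf r) ∈ {p : ℝ × ℝ | ∃ r ε : ℝ, (ε = 1 ∨ ε = -1) ∧
          p = (ε * ((1 - r) / (2 * Real.sqrt (1 - r + r ^ 2))),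
               ε * ((1 + r) / (6 * Real.sqrt (1 - r + r ^ 2))))} :=
        fun r => ⟨r, 1, Or.inl rfl, by simp [uf, vf]⟩
      have memS' : ∀ r : ℝ, (-uf r, -vf r) ∈ {p : ℝ × ℝ | ∃ r ε : ℝ, (ε = 1 ∨ ε = -1) ∧
          p = (ε * ((1 - r) / (2 * Real.sqrt (1 - r + r ^ 2))),
               ε * ((1 + r) / (6 * Real.sqrt (1 - r + r ^ 2))))} :=
        fun r => ⟨r, -1, Or.inr rfl, by simp [uf, vf]⟩
      rcases lt_trichotomy (u + 3 * v) 0 with hc | hc | hc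
      · obtain ⟨r, h1, h2⟩ := find_r (u := -u) (v := -v)
          (by linear_combination hp) (by linarith)
        apply subset_closure
        refine ⟨r, -1, Or.inr rfl, ?_⟩
        rw [show (1 - r) / (2 * Real.sqrt (1 - r + r ^ 2)) = uf r from rfl,
            show (1 + r) / (6 * Real.sqrt (1 - r + r ^ 2)) = vf r from rfl, h1, h2]
        norm_num
      · have hu : u = -3 * v := by linarith
        have hv36 : 36 * v ^ 2 = 1 := by linear_combination hp - 3 * (u - 3 * v) * hc
        rcases mul_eq_zero.1 (show (v - 1/6) * (v + 1/6) = 0 by linarith [hv36, sq_nonneg v])  with h | h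
        · have hv : v = 1/6 := by linarith
          have hu' : u = -(1/2) := by rw [hu, hv]; norm_num
          rw [hu', hv]
          exact mem_closure_of_tendsto (tendsto_uf.prodMk_nhds tendsto_vf)
            (Filter.Eventually.of_forall memS)
        · have hv : v = -(1/6) := by linarith
          have hu' : u = 1/2 := by rw [hu, hv]; norm_num
          rw [hu', hv]
          have ht : Filter.Tendsto (fun r : ℝ => (-uf r, -vf r)) atTop
              (nhds ((1/2 : ℝ), -(1/6 : ℝ))) := by
            have := (tendsto_uf.neg).prodMk_nhds (tendsto_vf.neg)
            norm_num at this
            convert this using 2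

          exact mem_closure_of_tendsto ht (Filter.Eventually.of_forall memS')
      · obtain ⟨r, h1, h2⟩ := find_r hp hc
        apply subset_closure
        refine ⟨r, 1, Or.inl rfl, ?_⟩
        rw [show (1 - r) / (2 * Real.sqrt (1 - r + r ^ 2)) = uf r from rfl,
            show (1 + r) / (6 * Real.sqrt (1 - r + r ^ 2)) = vf r from rfl, h1, h2]
        norm_num
end

section
/- For all real numbers k₁, k₂, writing q = cos k₁ + cos k₂ + cos(k₁−k₂), the inequality 3·(sin k₁ − sin k₂ + 2 sin(k₁−k₂))² + 9·(sin k₁ + sin k₂)² ≤ 4·(3 − q)·(3 + 2q) holds; equivalently, (cos k₁ + cos k₂ + cos(k₁−k₂))² ≤ 3·(cos²k₁ + cos²k₂ + cos²(k₁−k₂)). -/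
theorem hexagonal_key_inequality (k₁ k₂ : ℝ) :
    (3 * (Real.sin k₁ - Real.sin k₂ + 2 * Real.sin (k₁ - k₂)) ^ 2 +
        9 * (Real.sin k₁ + Real.sin k₂) ^ 2 ≤
      4 * (3 - (Real.cos k₁ + Real.cos k₂ + Real.cos (k₁ - k₂))) *
        (3 + 2 * (Real.cos k₁ + Real.cos k₂ + Real.cos (k₁ - k₂)))) ∧
    (Real.cos k₁ + Real.cos k₂ + Real.cos (k₁ - k₂)) ^ 2 ≤
      3 * (Real.cos k₁ ^ 2 + Real.cos k₂ ^ 2 + Real.cos (k₁ - k₂) ^ 2) := by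
  have hs := Real.sin_sub k₁ k₂
  have hc := Real.cos_sub k₁ k₂
  have h1 := Real.sin_sq_add_cos_sq k₁
  have h2 := Real.sin_sq_add_cos_sq k₂
  set s1 := Real.sin k₁
  set s2 := Real.sin k₂
  set c1 := Real.cos k₁
  set c2 := Real.cos k₂
  constructor
  · rw [hs, hc]
    have key :
        4 * (3 - (c1 + c2 + (c1 * c2 + s1 * s2))) *
            (3 + 2 * (c1 + c2 + (c1 * c2 + s1 * s2))) =
          (3 * (s1 - s2 + 2 * (s1 * c2 - c1 * s2)) ^ 2 + 9 * (s1 + s2) ^ 2) +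
            (3 * (c1 - c2) ^ 2 + (c1 + c2 - 2 * (c1 * c2 + s1 * s2)) ^ 2) := by
      linear_combination (-12 - 12 * c2 - 12 * c2 ^ 2 - 12 * s2 ^ 2) * h1 +
        (-24 - 12 * c1) * h2
    nlinarith [sq_nonneg (c1 - c2), sq_nonneg (c1 + c2 - 2 * (c1 * c2 + s1 * s2))]
  · rw [hc]
    nlinarith [sq_nonneg (c1 - c2), sq_nonneg (c1 + c2 - 2*(c1*c2+s1*s2)),
      sq_nonneg (s1 - s2), sq_nonneg (c1*c2 + s1*s2)]
end

section
/- Let α, β be real numbers with cos β = 1/4 + (3/4)·cos α and sin β ≠ 0. Then (3 sin α / (4 sin β))² = 3(1 + cos α)/(5 + 3 cos α), and this quantity satisfies 0 ≤ 3(1 + cos α)/(5 + 3 cos α) ≤ 3/4, with equality 3/4 if and only if cos α = 1. -/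
theorem kagome_gradient_factor (α β : ℝ)
    (h : Real.cos β = 1 / 4 + (3 / 4) * Real.cos α)
    (hs : Real.sin β ≠ 0) :
    (3 * Real.sin α / (4 * Real.sin β)) ^ 2 =
      3 * (1 + Real.cos α) / (5 + 3 * Real.cos α) ∧
    0 ≤ 3 * (1 + Real.cos α) / (5 + 3 * Real.cos α) ∧
    3 * (1 + Real.cos α) / (5 + 3 * Real.cos α) ≤ 3 / 4 ∧
    (3 * (1 + Real.cos α) / (5 + 3 * Real.cos α) = 3 / 4 ↔ Real.cos α = 1) := by
  have hca := Real.neg_one_le_cos α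
  have hca' := Real.cos_le_one α
  have hd : (0:ℝ) < 5 + 3 * Real.cos α := by nlinarith
  have hsb2 : Real.sin β ^ 2 = 1 - Real.cos β ^ 2 := by
    have := Real.sin_sq_add_cos_sq β; linarith
  have hsa2 : Real.sin α ^ 2 = 1 - Real.cos α ^ 2 := by
    have := Real.sin_sq_add_cos_sq α; linarith
  have hc1 : Real.cos α ≠ 1 := by
    intro hc
    apply hs
    have : Real.sin β ^ 2 = 0 := by rw [hsb2, h, hc]; ring
    exact pow_eq_zero_iff (n := 2) (by norm_num) |>.mp this
  have hsb2ne : Real.sin β ^ 2 ≠ 0 := pow_ne_zero _ hs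
  refine ⟨?_, ?_, ?_, ?_⟩
  · have key : Real.sin β ^ 2 = 3 * (1 - Real.cos α) * (5 + 3 * Real.cos α) / 16 := by
      rw [hsb2, h]; ring
    rw [div_pow]
    rw [show (4 * Real.sin β) ^ 2 = 16 * Real.sin β ^ 2 by ring, key]
    rw [show (3 * Real.sin α) ^ 2 = 9 * Real.sin α ^ 2 by ring, hsa2]
    have h1c : (1 : ℝ) - Real.cos α ≠ 0 := sub_ne_zero.mpr (fun e => hc1 e.symm)
    field_simp
    ring
  · exact div_nonneg (by linarith) hd.le
  · rw [div_le_iff₀ hd]; nlinarith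
  · rw [div_eq_iff hd.ne']; constructor <;> intro hh <;> nlinarith
end

section
/- Let d ≥ 1 be an integer and k : Fin d → ℝ. Then d·(Σⱼ sin²(kⱼ)) + (Σⱼ cos(kⱼ))² ≤ d². Consequently, if c = (1/d)·Σⱼ cos(kⱼ) satisfies c² ≠ 1 and xⱼ = sin(kⱼ)/(d·√(1 − c²)) for each j, then Σⱼ xⱼ² ≤ 1/d. -/
theorem square_lattice_orbit_in_ball (d : ℕ) (hd : 1 ≤ d) (k : Fin d → ℝ) :
    (d : ℝ) * (∑ j, Real.sin (k j) ^ 2) + (∑ j, Real.cos (k j)) ^ 2 ≤ (d : ℝ) ^ 2 ∧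
    ∀ c : ℝ, c = (1 / d) * ∑ j, Real.cos (k j) → c ^ 2 ≠ 1 →
      ∀ x : Fin d → ℝ,
        (∀ j, x j = Real.sin (k j) / (d * Real.sqrt (1 - c ^ 2))) →
        ∑ j, x j ^ 2 ≤ 1 / d := by
  have hd0 : (0:ℝ) < d := by exact_mod_cast hd
  have hCS : (∑ j, Real.cos (k j)) ^ 2 ≤ (d:ℝ) * ∑ j, Real.cos (k j) ^ 2 := by
    have := sq_sum_le_card_mul_sum_sq (s := (Finset.univ : Finset (Fin d)))
      (f := fun j => Real.cos (k j))
    simpa using this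
  have h1 : (d : ℝ) * (∑ j, Real.sin (k j) ^ 2) + (∑ j, Real.cos (k j)) ^ 2 ≤ (d : ℝ) ^ 2 := by
    have : (d:ℝ) * (∑ j, Real.sin (k j) ^ 2) + (d:ℝ) * ∑ j, Real.cos (k j) ^ 2 = (d:ℝ)^2 := by
      rw [← mul_add, ← Finset.sum_add_distrib]
      simp [Real.sin_sq_add_cos_sq]
      ring
    nlinarith
  refine ⟨h1, fun c hc hc1 x hx => ?_⟩
  have hsin : (0:ℝ) ≤ ∑ j, Real.sin (k j) ^ 2 := Finset.sum_nonneg fun j _ => sq_nonneg _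
  have hc2 : c ^ 2 ≤ 1 := by
    have : (∑ j, Real.cos (k j)) ^ 2 ≤ (d:ℝ)^2 := by nlinarith
    rw [hc]
    rw [mul_pow]
    calc (1/(d:ℝ))^2 * (∑ j, Real.cos (k j))^2 ≤ (1/(d:ℝ))^2 * (d:ℝ)^2 := by
          apply mul_le_mul_of_nonneg_left this (by positivity)
      _ = 1 := by field_simp
  have hlt : c ^ 2 < 1 := lt_of_le_of_ne hc2 hc1
  have hpos : (0:ℝ) < 1 - c ^ 2 := by linarith
  have hsq : Real.sqrt (1 - c ^ 2) ^ 2 = 1 - c ^ 2 := Real.sq_sqrt hpos.le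
  have hsum : ∑ j, x j ^ 2 = (∑ j, Real.sin (k j) ^ 2) / ((d:ℝ)^2 * (1 - c^2)) := by
    rw [Finset.sum_div]
    apply Finset.sum_congr rfl
    intro j _
    rw [hx j, div_pow, mul_pow, hsq]
  rw [hsum, div_le_div_iff₀ (by positivity) hd0]
  have hkey : (d:ℝ) * (∑ j, Real.sin (k j) ^ 2) ≤ (d:ℝ)^2 - (∑ j, Real.cos (k j))^2 := by
    linarith
  have hcsq : c ^ 2 = (∑ j, Real.cos (k j))^2 / (d:ℝ)^2 := by
    rw [hc]; field_simp
  calc (∑ j, Real.sin (k j) ^ 2) * (d:ℝ) ≤ (d:ℝ)^2 - (∑ j, Real.cos (k j))^2 := by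
        linarith [hkey]
    _ = 1 * ((d:ℝ)^2 * (1 - c^2)) := by rw [hcsq]; field_simp
end

section
/- Let G₀ be a finite connected simple graph with vertex set V₀ (every vertex of positive degree) and dart set A₀ (each edge giving two opposite darts e and ē with origin o(e) and terminus t(e)). Let w : A₀ → ℂ satisfy |w(e)| = 1 and w(ē) = conjugate of w(e) for all e. Define the twisted transition matrix P̂ on ℂ^{V₀} by (P̂ f)(u) = Σ_{e ∈ A₀ : t(e) = u} (1/deg(o(e)))·w(e)·f(o(e)), and the twisted Grover matrix Û on ℂ^{A₀} by (Ûψ)(e) = Σ_{f ∈ A₀ : t(f) = o(e)} (2/deg(o(e)) − δ_{e,f̄})·w(f)·ψ(f). Then: (i) for every λ ∈ ℂ with λ ≠ 0 such that (λ + λ⁻¹)/2 is an eigenvalue of P̂, λ is an eigenvalue of Û; (ii) every eigenvalue λ of Û with λ ∉ {1, −1} satisfies that (λ + λ⁻¹)/2 is an eigenvalue of P̂. -/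
open Finset

section Aux
variable {V : Type*} [Fintype V] [DecidableEq V] {G : SimpleGraph V} [DecidableRel G.Adj]

lemma tg_sum_dart_snd (u : V) (F : G.Dart → ℂ) :
    (∑ e : G.Dart, if e.snd = u then F e else 0)
      = ∑ e : G.Dart, if e.fst = u then F e.symm else 0 := by
  refine Fintype.sum_bijective _ SimpleGraph.Dart.symm_involutive.bijective _ _ ?_
  intro e
  simp

lemma tg_sum_dart_snd_const (u : V) (c : ℂ) :
    (∑ e : G.Dart, if e.snd = u then c else 0) = (G.degree u : ℂ) * c := by
  rw [tg_sum_dart_snd, ← Finset.sum_filter, Finset.sum_const,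
    SimpleGraph.dart_fst_fiber_card_eq_degree]
  simp [mul_comm]

lemma tg_sum_congr_snd (u : V) (A B : G.Dart → ℂ)
    (h : ∀ e : G.Dart, e.snd = u → A e = B e) :
    (∑ e : G.Dart, if e.snd = u then A e else 0)
      = ∑ e : G.Dart, if e.snd = u then B e else 0 :=
  Finset.sum_congr rfl fun e _ => by by_cases hp : e.snd = u <;> simp [hp, h e]

lemma tg_sum_snd_sub (u : V) (A B : G.Dart → ℂ) :
    (∑ e : G.Dart, if e.snd = u then A e - B e else 0)
      = (∑ e : G.Dart, if e.snd = u then A e else 0)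
        - ∑ e : G.Dart, if e.snd = u then B e else 0 := by
  rw [← Finset.sum_sub_distrib]
  exact Finset.sum_congr rfl fun e _ => by by_cases hp : e.snd = u <;> simp [hp]

lemma tg_sum_snd_add (u : V) (A B : G.Dart → ℂ) :
    (∑ e : G.Dart, if e.snd = u then A e + B e else 0)
      = (∑ e : G.Dart, if e.snd = u then A e else 0)
        + ∑ e : G.Dart, if e.snd = u then B e else 0 := by
  rw [← Finset.sum_add_distrib]
  exact Finset.sum_congr rfl fun e _ => by by_cases hp : e.snd = u <;> simp [hp]

lemma tg_sum_snd_mul (u : V) (c : ℂ) (F : G.Dart → ℂ) :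
    (∑ e : G.Dart, if e.snd = u then c * F e else 0)
      = c * ∑ e : G.Dart, if e.snd = u then F e else 0 := by
  rw [Finset.mul_sum]
  exact Finset.sum_congr rfl fun e _ => by by_cases hp : e.snd = u <;> simp [hp]

end Aux

theorem twisted_grover_spectral_mapping {V : Type*} [Fintype V] [DecidableEq V]
    (G : SimpleGraph V) [DecidableRel G.Adj] [DecidableEq G.Dart]
    (hconn : G.Connected) (hdeg : ∀ v : V, 0 < G.degree v)
    (w : G.Dart → ℂ)
    (hw1 : ∀ e : G.Dart, ‖w e‖ = 1)
    (hw2 : ∀ e : G.Dart, w e.symm = starRingEnd ℂ (w e))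
    (P : Matrix V V ℂ)
    (hP : ∀ u v : V, P u v =
      ∑ e : G.Dart, if e.snd = u ∧ e.fst = v then (G.degree e.fst : ℂ)⁻¹ * w e else 0)
    (U : Matrix G.Dart G.Dart ℂ)
    (hU : ∀ e f : G.Dart, U e f =
      if f.snd = e.fst then (2 / (G.degree e.fst : ℂ) - if f = e.symm then 1 else 0) * w f
      else 0) :
    (∀ lam : ℂ, lam ≠ 0 →
      Module.End.HasEigenvalue (Matrix.toLin' P) ((lam + lam⁻¹) / 2) →
      Module.End.HasEigenvalue (Matrix.toLin' U) lam) ∧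
    (∀ lam : ℂ, Module.End.HasEigenvalue (Matrix.toLin' U) lam →
      lam ≠ 1 → lam ≠ -1 →
      Module.End.HasEigenvalue (Matrix.toLin' P) ((lam + lam⁻¹) / 2)) := by
  classical
  have hdC : ∀ v : V, (G.degree v : ℂ) ≠ 0 := fun v => Nat.cast_ne_zero.mpr (hdeg v).ne'
  have hww : ∀ e : G.Dart, w e * w e.symm = 1 := by
    intro e
    rw [hw2, Complex.mul_conj, Complex.normSq_eq_norm_sq, hw1]
    norm_num
  have hww' : ∀ e : G.Dart, w e.symm * w e = 1 := fun e => by rw [mul_comm]; exact hww e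
  have hwne : ∀ e : G.Dart, w e ≠ 0 := by
    intro e he
    have h1 := hww e
    rw [he, zero_mul] at h1
    exact (one_ne_zero : (1:ℂ) ≠ 0) h1.symm
  have hss : ∀ e : G.Dart, e.symm.snd = e.fst := fun e => rfl
  -- action of P
  have hPapp : ∀ (f : V → ℂ) (u : V),
      P.mulVec f u
        = ∑ e : G.Dart, if e.snd = u then (G.degree e.fst : ℂ)⁻¹ * w e * f e.fst else 0 := by
    intro f u
    unfold Matrix.mulVec dotProduct
    simp_rw [hP, Finset.sum_mul, ite_mul, zero_mul]
    rw [Finset.sum_comm]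
    refine Finset.sum_congr rfl fun e _ => ?_
    by_cases h : e.snd = u
    · simp [h]
    · simp [h]
  set m : (G.Dart → ℂ) → V → ℂ :=
    fun ψ u => ∑ f : G.Dart, if f.snd = u then w f * ψ f else 0 with hm
  -- action of U
  have hUapp : ∀ (ψ : G.Dart → ℂ) (e : G.Dart),
      U.mulVec ψ e = (2 / (G.degree e.fst : ℂ)) * m ψ e.fst - w e.symm * ψ e.symm := by
    intro ψ e
    unfold Matrix.mulVec dotProduct
    simp_rw [hU, ite_mul, zero_mul]
    have key : ∀ f : G.Dart,
        (if f.snd = e.fst then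
            (2 / (G.degree e.fst : ℂ) - if f = e.symm then 1 else 0) * w f * ψ f else 0)
          = (if f.snd = e.fst then 2 / (G.degree e.fst : ℂ) * (w f * ψ f) else 0)
            - (if f = e.symm then w f * ψ f else 0) := by
      intro f
      by_cases h1 : f.snd = e.fst
      · by_cases h2 : f = e.symm <;> simp [h1, h2] <;> ring
      · have h2 : f ≠ e.symm := fun hh => h1 (by rw [hh]; exact hss e)
        simp [h1, h2]
    rw [Finset.sum_congr rfl fun f _ => key f, Finset.sum_sub_distrib]
    congr 1
    · rw [hm, Finset.mul_sum]
      exact Finset.sum_congr rfl fun f _ => by by_cases h : f.snd = e.fst <;> simp [h]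
    · simp
  -- eigen translations
  have toEigP : ∀ (μ : ℂ) (f : V → ℂ), f ≠ 0 → P.mulVec f = μ • f →
      Module.End.HasEigenvalue (Matrix.toLin' P) μ := by
    intro μ f hf he
    apply Module.End.hasEigenvalue_of_hasEigenvector (x := f)
    refine ⟨Module.End.mem_eigenspace_iff.mpr ?_, hf⟩
    rw [Matrix.toLin'_apply, he]
  have toEigU : ∀ (μ : ℂ) (ψ : G.Dart → ℂ), ψ ≠ 0 → U.mulVec ψ = μ • ψ →
      Module.End.HasEigenvalue (Matrix.toLin' U) μ := by
    intro μ ψ hψ he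
    apply Module.End.hasEigenvalue_of_hasEigenvector (x := ψ)
    refine ⟨Module.End.mem_eigenspace_iff.mpr ?_, hψ⟩
    rw [Matrix.toLin'_apply, he]
  constructor
  · -- direction (i)
    intro lam hlam hPev
    obtain ⟨f, hf⟩ := hPev.exists_hasEigenvector
    have hf0 : f ≠ 0 := hf.right
    have hfe : ∀ u, P.mulVec f u = ((lam + lam⁻¹) / 2) * f u := by
      intro u
      have h := hf.apply_eq_smul
      rw [Matrix.toLin'_apply] at h
      simpa using congrFun h u
    set ψ : G.Dart → ℂ := fun e =>
      (G.degree e.fst : ℂ)⁻¹ * f e.fst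
        - lam⁻¹ * (w e.symm * ((G.degree e.snd : ℂ)⁻¹ * f e.snd)) with hψ
    have hmψ : ∀ u, m ψ u = ((lam + lam⁻¹) / 2) * f u - lam⁻¹ * f u := by
      intro u
      have step : ∀ e : G.Dart, e.snd = u →
          w e * ψ e = (G.degree e.fst : ℂ)⁻¹ * w e * f e.fst
            - lam⁻¹ * ((G.degree u : ℂ)⁻¹ * f u) := by
        intro e he
        have h2 : w e * ψ e = (G.degree e.fst : ℂ)⁻¹ * w e * f e.fst
            - lam⁻¹ * ((w e * w e.symm) * ((G.degree e.snd : ℂ)⁻¹ * f e.snd)) := by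
          simp only [hψ]; ring
        rw [h2, hww e, he]; ring
      have hd := hdC u
      calc m ψ u = ∑ e : G.Dart, if e.snd = u then w e * ψ e else 0 := rfl
        _ = ∑ e : G.Dart, if e.snd = u then
              (G.degree e.fst : ℂ)⁻¹ * w e * f e.fst
                - lam⁻¹ * ((G.degree u : ℂ)⁻¹ * f u) else 0 :=
            tg_sum_congr_snd u _ _ step
        _ = (lam + lam⁻¹) / 2 * f u - lam⁻¹ * f u := by
            rw [tg_sum_snd_sub, ← hPapp f u, tg_sum_dart_snd_const, hfe u]
            field_simp
    have hUψ : ∀ e, U.mulVec ψ e = lam * ψ e := by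
      intro e
      rw [hUapp, hmψ]
      have hψs : ψ e.symm = (G.degree e.snd : ℂ)⁻¹ * f e.snd
          - lam⁻¹ * (w e * ((G.degree e.fst : ℂ)⁻¹ * f e.fst)) := by
        simp only [hψ, SimpleGraph.Dart.symm_symm]
        rfl
      rw [hψs]
      simp only [hψ]
      have hl : lam * lam⁻¹ = 1 := mul_inv_cancel₀ hlam
      have hw := hww' e
      linear_combination (lam⁻¹ * ((G.degree e.fst : ℂ)⁻¹ * f e.fst)) * hw
        + (w e.symm * ((G.degree e.snd : ℂ)⁻¹ * f e.snd)) * hl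
    by_cases hψ0 : ψ = 0
    · -- degenerate case : lam^2 = 1
      have hrel : ∀ e : G.Dart, (G.degree e.fst : ℂ)⁻¹ * f e.fst
          = lam⁻¹ * (w e.symm * ((G.degree e.snd : ℂ)⁻¹ * f e.snd)) := by
        intro e
        have h2 := congrFun hψ0 e
        simp only [hψ, Pi.zero_apply] at h2
        exact sub_eq_zero.mp h2
      obtain ⟨u, hu⟩ := Function.ne_iff.mp hf0
      obtain ⟨v, hv⟩ := G.degree_pos_iff_exists_adj u |>.mp (hdeg u)
      set e₀ : G.Dart := ⟨(u, v), hv⟩ with he₀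
      have h1 := hrel e₀
      have h2 := hrel e₀.symm
      rw [SimpleGraph.Dart.symm_symm] at h2
      rw [show e₀.symm.fst = e₀.snd from rfl, show e₀.symm.snd = e₀.fst from rfl] at h2
      rw [h2] at h1
      have hA : (G.degree e₀.fst : ℂ)⁻¹ * f e₀.fst ≠ 0 := by
        have : f e₀.fst ≠ 0 := by simpa using hu
        exact mul_ne_zero (inv_ne_zero (hdC _)) this
      have h3 : (1 - lam⁻¹ * (w e₀.symm * (lam⁻¹ * w e₀)))
          * ((G.degree e₀.fst : ℂ)⁻¹ * f e₀.fst) = 0 := by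
        linear_combination h1
      have h4 : 1 - lam⁻¹ * (w e₀.symm * (lam⁻¹ * w e₀)) = 0 :=
        (mul_eq_zero.mp h3).resolve_right hA
      have h5 : lam⁻¹ * lam⁻¹ = 1 := by
        have h6 := hww' e₀
        linear_combination (-1 : ℂ) * h4 - lam⁻¹ * lam⁻¹ * h6
      have hl2 : lam * lam = 1 := by
        calc lam * lam = lam * lam * (lam⁻¹ * lam⁻¹) := by rw [h5, mul_one]
          _ = (lam * lam⁻¹) * (lam * lam⁻¹) := by ring
          _ = 1 := by rw [mul_inv_cancel₀ hlam, mul_one]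
      have hinv : lam⁻¹ = lam := inv_eq_of_mul_eq_one_left hl2
      set ψ' : G.Dart → ℂ := fun e => (G.degree e.fst : ℂ)⁻¹ * f e.fst with hψ'
      have hψ'0 : ψ' ≠ 0 := by
        intro h
        have h7 := congrFun h e₀
        simp only [hψ', Pi.zero_apply] at h7
        exact hA h7
      have hmψ' : ∀ u', m ψ' u' = lam * f u' := by
        intro u'
        calc m ψ' u' = ∑ e : G.Dart, if e.snd = u' then w e * ψ' e else 0 := rfl
          _ = ∑ e : G.Dart, if e.snd = u'
                then (G.degree e.fst : ℂ)⁻¹ * w e * f e.fst else 0 :=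
              tg_sum_congr_snd u' _ _ (fun e _ => by simp only [hψ']; ring)
          _ = lam * f u' := by rw [← hPapp f u', hfe u', hinv]; ring
      refine toEigU lam ψ' hψ'0 (funext fun e => ?_)
      rw [Pi.smul_apply, smul_eq_mul, hUapp, hmψ']
      have h1' := hrel e
      have hc : lam * lam⁻¹ = 1 := mul_inv_cancel₀ hlam
      simp only [hψ']
      rw [show e.symm.fst = e.snd from rfl]
      linear_combination lam * h1'
        + (w e.symm * ((G.degree e.snd : ℂ)⁻¹ * f e.snd)) * hc
    · refine toEigU lam ψ hψ0 (funext fun e => ?_)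
      rw [Pi.smul_apply, smul_eq_mul]
      exact hUψ e
  · -- direction (ii)
    intro lam hev h1 hm1
    obtain ⟨ψ, hψv⟩ := hev.exists_hasEigenvector
    have hψ0 : ψ ≠ 0 := hψv.right
    have hψe : ∀ e, U.mulVec ψ e = lam * ψ e := by
      intro e
      have h := hψv.apply_eq_smul
      rw [Matrix.toLin'_apply] at h
      simpa using congrFun h e
    have hlam : lam ≠ 0 := by
      rintro rfl
      have hz : ∀ e : G.Dart, (2 / (G.degree e.fst : ℂ)) * m ψ e.fst
          = w e.symm * ψ e.symm := by
        intro e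
        have h2 := hψe e
        rw [hUapp, zero_mul] at h2
        exact sub_eq_zero.mp h2
      have hz' : ∀ f : G.Dart, w f * ψ f = (2 / (G.degree f.snd : ℂ)) * m ψ f.snd := by
        intro f
        have h2 := hz f.symm
        rw [SimpleGraph.Dart.symm_symm] at h2
        exact h2.symm
      have hmz : ∀ u, m ψ u = 0 := by
        intro u
        have h3 : m ψ u = (G.degree u : ℂ) * ((2 / (G.degree u : ℂ)) * m ψ u) :=
          calc m ψ u = ∑ e : G.Dart, if e.snd = u then w e * ψ e else 0 := rfl
            _ = ∑ e : G.Dart, if e.snd = u then (2 / (G.degree u : ℂ)) * m ψ u else 0 :=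
                tg_sum_congr_snd u _ _ (fun e he => by rw [hz' e, he])
            _ = (G.degree u : ℂ) * ((2 / (G.degree u : ℂ)) * m ψ u) :=
                tg_sum_dart_snd_const u _
        have hd := hdC u
        have h4 : (G.degree u : ℂ) * ((2 / (G.degree u : ℂ)) * m ψ u) = 2 * m ψ u := by
          field_simp
        rw [h4] at h3
        linear_combination (-1 : ℂ) * h3
      apply hψ0
      funext e0
      have h5 := hz' e0
      rw [hmz, mul_zero] at h5
      have h6 := (mul_eq_zero.mp h5).resolve_left (hwne e0)
      simpa using h6
    have hl2 : lam * lam ≠ 1 := by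
      intro h
      have h2 : (lam - 1) * (lam + 1) = 0 := by linear_combination h
      rcases mul_eq_zero.mp h2 with h' | h'
      · exact h1 (by linear_combination h')
      · exact hm1 (by linear_combination h')
    have hdiff : lam - lam⁻¹ ≠ 0 := by
      intro h
      apply hl2
      have hc : lam * lam⁻¹ = 1 := mul_inv_cancel₀ hlam
      linear_combination lam * h + hc
    set g : V → ℂ := m ψ with hg
    have hF : ∀ e : G.Dart, (lam - lam⁻¹) * ψ e
        = 2 / (G.degree e.fst : ℂ) * g e.fst
          - lam⁻¹ * (2 / (G.degree e.snd : ℂ)) * (w e.symm * g e.snd) := by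
      intro e
      have hE := hψe e
      rw [hUapp] at hE
      have hE' := hψe e.symm
      rw [hUapp] at hE'
      rw [SimpleGraph.Dart.symm_symm] at hE'
      rw [show e.symm.fst = e.snd from rfl] at hE'
      have hc : lam⁻¹ * lam = 1 := inv_mul_cancel₀ hlam
      have hw := hww' e
      linear_combination (-1 : ℂ) * hE + (lam⁻¹ * w e.symm) * hE'
        + (w e.symm * ψ e.symm) * hc + (lam⁻¹ * ψ e) * hw
    have hg0 : g ≠ 0 := by
      intro h
      apply hψ0
      funext e
      have h2 := hF e
      rw [h] at h2
      simp only [Pi.zero_apply, mul_zero, zero_mul, sub_zero, zero_sub, neg_zero] at h2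
      have h3 := (mul_eq_zero.mp h2).resolve_left hdiff
      simpa using h3
    have hPg : ∀ u, P.mulVec g u = ((lam + lam⁻¹) / 2) * g u := by
      intro u
      have key : ∀ e : G.Dart, e.snd = u →
          (G.degree e.fst : ℂ)⁻¹ * w e * g e.fst
            = (lam - lam⁻¹) / 2 * (w e * ψ e)
              + lam⁻¹ * ((G.degree u : ℂ)⁻¹ * g u) := by
        intro e he
        have h2 := hF e
        rw [he] at h2
        have hw := hww e
        linear_combination (-(w e) / 2) * h2
          + (lam⁻¹ * (G.degree u : ℂ)⁻¹ * g u) * hw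
      rw [hPapp, tg_sum_congr_snd u _ _ key, tg_sum_snd_add, tg_sum_snd_mul,
        tg_sum_dart_snd_const]
      have hgu : (∑ e : G.Dart, if e.snd = u then w e * ψ e else 0) = g u := rfl
      rw [hgu]
      have hd := hdC u
      field_simp
      ring
    exact toEigP _ g hg0 (funext fun u => by
      rw [Pi.smul_apply, smul_eq_mul]; exact hPg u)
end
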